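/- arXiv:1411.0648 — 5 statements merged into one kernel-verified Lean document; each statement's English description precedes it below -/
import Mathlib

section
/- For α > 0, c > 0, the function v(x,t) = (ct)^{1-2α}/B(α,1/2) · (c²t² - x²)^{α-1}, defined for |x| < ct, satisfies the Euler–Poisson–Darboux equation ∂²v/∂t² + (2α/t)·∂v/∂t = c²·∂²v/∂x² at every point (x,t) with t > 0 and |x| < ct. -/
open Real

/-- Beta function `B(a,b) = Γ(a)Γ(b)/Γ(a+b)`. -/
noncomputable def realBeta (a b : ℝ) : ℝ := Real.Gamma a * Real.Gamma b / Real.Gamma (a + b)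

/-- The EPD fundamental density. -/
noncomputable def epdDensity (α c : ℝ) (x t : ℝ) : ℝ :=
  (c * t) ^ (1 - 2 * α) / realBeta α (1 / 2) * (c ^ 2 * t ^ 2 - x ^ 2) ^ (α - 1)

/-!
Both partial derivatives of `v` are `v` times a rational function (its logarithmic derivative
`L`), so each second derivative is `v * (L ^ 2 + L')`. Dividing the equation by `v` leaves a
rational identity in `x`, `t`, `c`, `α`.
-/

open Filter Topology

theorem HasDerivAt.rpow_mul_rpow {f g : ℝ → ℝ} {f' g' x : ℝ} (p q : ℝ)
    (hf : HasDerivAt f f' x) (hg : HasDerivAt g g' x) (hfx : f x ≠ 0) (hgx : g x ≠ 0) :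
    HasDerivAt (fun y => f y ^ p * g y ^ q)
      (f x ^ p * g x ^ q * (p * f' / f x + q * g' / g x)) x := by
  refine ((hf.rpow_const (p := p) (Or.inl hfx)).mul
    (hg.rpow_const (p := q) (Or.inl hgx))).congr_deriv ?_
  rw [rpow_sub_one hfx, rpow_sub_one hgx]
  field_simp

theorem deriv_deriv_eq_mul_logDeriv {f L : ℝ → ℝ} {x : ℝ}
    (hf : ∀ᶠ y in 𝓝 x, HasDerivAt f (f y * L y) y) (hL : DifferentiableAt ℝ L x) :
    deriv (deriv f) x = f x * (L x ^ 2 + deriv L x) := by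
  have hderiv : deriv f =ᶠ[𝓝 x] fun y => f y * L y := hf.mono fun y hy => hy.deriv
  rw [hderiv.deriv_eq]
  exact (hf.self_of_nhds.mul hL.hasDerivAt).deriv.trans (by ring)

theorem epdDensity_eq (α c x t : ℝ) :
    epdDensity α c x t =
      (realBeta α (1 / 2))⁻¹ * ((c * t) ^ (1 - 2 * α) * (c ^ 2 * t ^ 2 - x ^ 2) ^ (α - 1)) := by
  rw [epdDensity]
  ring

section EPD

variable {α c x t : ℝ}

theorem sq_mul_sq_sub_sq_pos (hx : |x| < c * t) : 0 < c ^ 2 * t ^ 2 - x ^ 2 := by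
  have := sq_lt_sq' (abs_lt.1 hx).1 (abs_lt.1 hx).2
  linarith [mul_pow c t 2]

theorem mul_pos_of_abs_lt (hx : |x| < c * t) : 0 < c * t :=
  (abs_nonneg x).trans_lt hx

noncomputable def epdTimeLogDeriv (α c x t : ℝ) : ℝ :=
  (1 - 2 * α) / t + 2 * (α - 1) * c ^ 2 * t / (c ^ 2 * t ^ 2 - x ^ 2)

noncomputable def epdSpaceLogDeriv (α c t x : ℝ) : ℝ :=
  -(2 * (α - 1) * x / (c ^ 2 * t ^ 2 - x ^ 2))

theorem hasDerivAt_epdDensity_time (hx : |x| < c * t) :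
    HasDerivAt (fun s => epdDensity α c x s) (epdDensity α c x t * epdTimeLogDeriv α c x t) t := by
  have hct := (mul_pos_of_abs_lt hx).ne'
  have hu := (sq_mul_sq_sub_sq_pos hx).ne'
  have hc : c ≠ 0 := left_ne_zero_of_mul hct
  have ht : t ≠ 0 := right_ne_zero_of_mul hct
  have hcone : HasDerivAt (fun s => c ^ 2 * s ^ 2 - x ^ 2) (c ^ 2 * (2 * t)) t := by
    simpa using ((hasDerivAt_pow 2 t).const_mul (c ^ 2)).sub_const (x ^ 2)
  simp only [epdDensity_eq]
  refine (((hasDerivAt_id' t).const_mul c).rpow_mul_rpow (1 - 2 * α) (α - 1) hcone hct hu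
    |>.const_mul _).congr_deriv ?_
  rw [epdTimeLogDeriv]
  field_simp

theorem hasDerivAt_epdDensity_space (hx : |x| < c * t) :
    HasDerivAt (fun y => epdDensity α c y t) (epdDensity α c x t * epdSpaceLogDeriv α c t x) x := by
  have hct := (mul_pos_of_abs_lt hx).ne'
  have hu := (sq_mul_sq_sub_sq_pos hx).ne'
  have hcone : HasDerivAt (fun y => c ^ 2 * t ^ 2 - y ^ 2) (-(2 * x)) x := by
    simpa using (hasDerivAt_pow 2 x).const_sub (c ^ 2 * t ^ 2)
  simp only [epdDensity_eq]
  refine ((hasDerivAt_const x (c * t)).rpow_mul_rpow (1 - 2 * α) (α - 1) hcone hct hu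
    |>.const_mul _).congr_deriv ?_
  rw [epdSpaceLogDeriv]
  field_simp
  ring

theorem hasDerivAt_epdTimeLogDeriv (hx : |x| < c * t) :
    HasDerivAt (epdTimeLogDeriv α c x)
      (-((1 - 2 * α) / t ^ 2) - 2 * (α - 1) * c ^ 2 * (c ^ 2 * t ^ 2 + x ^ 2)
        / (c ^ 2 * t ^ 2 - x ^ 2) ^ 2) t := by
  have ht : t ≠ 0 := right_ne_zero_of_mul (mul_pos_of_abs_lt hx).ne'
  have hu := (sq_mul_sq_sub_sq_pos hx).ne'
  have hcone : HasDerivAt (fun s => c ^ 2 * s ^ 2 - x ^ 2) (c ^ 2 * (2 * t)) t := by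
    simpa using ((hasDerivAt_pow 2 t).const_mul (c ^ 2)).sub_const (x ^ 2)
  refine ((((hasDerivAt_id' t).inv ht).const_mul (1 - 2 * α)).add
    (((hasDerivAt_id' t).const_mul (2 * (α - 1) * c ^ 2)).div hcone hu)).congr_deriv ?_
  field_simp
  ring

theorem hasDerivAt_epdSpaceLogDeriv (hx : |x| < c * t) :
    HasDerivAt (epdSpaceLogDeriv α c t)
      (-(2 * (α - 1) * (c ^ 2 * t ^ 2 + x ^ 2) / (c ^ 2 * t ^ 2 - x ^ 2) ^ 2)) x := by
  have hu := (sq_mul_sq_sub_sq_pos hx).ne'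
  have hcone : HasDerivAt (fun y => c ^ 2 * t ^ 2 - y ^ 2) (-(2 * x)) x := by
    simpa using (hasDerivAt_pow 2 x).const_sub (c ^ 2 * t ^ 2)
  refine ((((hasDerivAt_id' x).const_mul (2 * (α - 1))).div hcone hu).neg).congr_deriv ?_
  field_simp
  ring

theorem epd_logDeriv_identity (hx : |x| < c * t) :
    epdTimeLogDeriv α c x t ^ 2 + deriv (epdTimeLogDeriv α c x) t
        + 2 * α / t * epdTimeLogDeriv α c x t
      = c ^ 2 * (epdSpaceLogDeriv α c t x ^ 2 + deriv (epdSpaceLogDeriv α c t) x) := by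
  have ht : t ≠ 0 := right_ne_zero_of_mul (mul_pos_of_abs_lt hx).ne'
  have hu := (sq_mul_sq_sub_sq_pos hx).ne'
  rw [(hasDerivAt_epdTimeLogDeriv hx).deriv, (hasDerivAt_epdSpaceLogDeriv hx).deriv,
    epdTimeLogDeriv, epdSpaceLogDeriv]
  -- abstracting `u` stops `field_simp` from expanding the denominators
  generalize hv : c ^ 2 * t ^ 2 - x ^ 2 = u at hu ⊢
  have hx2 : x ^ 2 = c ^ 2 * t ^ 2 - u := by rw [← hv]; ring
  field_simp
  rw [hx2]
  ring

end EPD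

theorem epd_density_solves_EPD_general (α c : ℝ)
    (x t : ℝ) (hx : |x| < c * t) :
    deriv (fun s => deriv (fun r => epdDensity α c x r) s) t
      + (2 * α / t) * deriv (fun r => epdDensity α c x r) t
      = c ^ 2 * deriv (fun s => deriv (fun r => epdDensity α c r t) s) x := by
  have htime : ∀ᶠ s in 𝓝 t, |x| < c * s :=
    (isOpen_lt continuous_const (continuous_const.mul continuous_id)).mem_nhds hx
  have hspace : ∀ᶠ y in 𝓝 x, |y| < c * t :=
    (isOpen_lt continuous_abs continuous_const).mem_nhds hx
  rw [deriv_deriv_eq_mul_logDeriv (htime.mono fun s hs => hasDerivAt_epdDensity_time hs)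
      (hasDerivAt_epdTimeLogDeriv hx).differentiableAt,
    (hasDerivAt_epdDensity_time hx).deriv,
    deriv_deriv_eq_mul_logDeriv (hspace.mono fun y hy => hasDerivAt_epdDensity_space hy)
      (hasDerivAt_epdSpaceLogDeriv hx).differentiableAt]
  linear_combination epdDensity α c x t * epd_logDeriv_identity (α := α) hx

/-- the EPD density solves the Euler–Poisson–Darboux equation
`∂²v/∂t² + (2α/t) ∂v/∂t = c² ∂²v/∂x²` on `{t > 0, |x| < ct}`. -/
theorem epd_density_solves_EPD (α c : ℝ) (hα : 0 < α) (hc : 0 < c)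
    (x t : ℝ) (ht : 0 < t) (hx : |x| < c * t) :
    deriv (fun s => deriv (fun r => epdDensity α c x r) s) t
      + (2 * α / t) * deriv (fun r => epdDensity α c x r) t
      = c ^ 2 * deriv (fun s => deriv (fun r => epdDensity α c r t) s) x :=
  epd_density_solves_EPD_general α c x t hx
end

section
/- Let f : ℝ → ℝ be twice continuously differentiable and let w(x,t) = (f(x+ct) + f(x-ct))/2 be the D'Alembert solution of the wave equation with initial datum f and zero initial velocity. Then for α > 0 the Erdélyi–Kober average v(x,t) = (2/B(α,1/2)) ∫₀¹ (1-u²)^{α-1} w(x, ut) du satisfies the Euler–Poisson–Darboux equation ∂²v/∂t² + (2α/t)·∂v/∂t = c²·∂²v/∂x² for t > 0, with v(x,0) = f(x). -/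
open Real intervalIntegral

/-!
Write `M g (t) = ∫₀¹ (1 - u²)^(α-1) g(u t) du`. Differentiating under the integral sign and
integrating `t ∫₀¹ (1 - u²)^α g''(u t) du` by parts shows that, when `g'(0) = 0`,
`(M g)'' + (2α/t) (M g)' = M (g'')`. The d'Alembert solution `s ↦ w(x, s)` is even, so this
applies to it, and `∂ₛ² w = c² ∂ₓ² w` turns `M (∂ₛ² w)` into `c² ∂ₓ² (M w)`, again by
differentiating under the integral sign. The initial value follows from
`∫₀¹ (1 - u²)^(α-1) du = B(α, 1/2) / 2`, the Beta integral after the substitution `x = u²`.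
-/

open MeasureTheory Set Metric Function

lemma intervalIntegrable_one_sub_sq_rpow {α : ℝ} (hα : 0 < α) :
    IntervalIntegrable (fun u : ℝ => (1 - u ^ 2) ^ (α - 1)) volume 0 1 := by
  have h₁ : IntervalIntegrable (fun u : ℝ => (1 - u) ^ (α - 1)) volume 0 1 := by
    simpa using ((intervalIntegrable_rpow' (a := 0) (b := 1) (r := α - 1)
      (by linarith)).comp_sub_left 1).symm
  have h₂ : ContinuousOn (fun u : ℝ => (1 + u) ^ (α - 1)) (uIcc 0 1) := fun u hu => by
    rw [uIcc_of_le zero_le_one] at hu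
    have : 1 + u ≠ 0 := by linarith [hu.1]
    exact ((continuousAt_const.add continuousAt_id).rpow_const (Or.inl this)).continuousWithinAt
  refine (h₁.mul_continuousOn h₂).congr fun u hu => ?_
  rw [uIoc_of_le zero_le_one] at hu
  have h₁ : (0:ℝ) ≤ 1 - u := by linarith [hu.2]
  have h₂ : (0:ℝ) ≤ 1 + u := by linarith [hu.1]
  simp only [← mul_rpow h₁ h₂]
  ring_nf

lemma integral_rpow_mul_one_sub_rpow {a b : ℝ} (ha : 0 < a) (hb : 0 < b) :
    ∫ x in (0:ℝ)..1, x ^ (a - 1) * (1 - x) ^ (b - 1) = realBeta a b := by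
  have h : Complex.betaIntegral a b
      = ↑(∫ x in (0:ℝ)..1, x ^ (a - 1) * (1 - x) ^ (b - 1)) := by
    rw [Complex.betaIntegral, ← integral_ofReal]
    refine integral_congr fun x hx => ?_
    rw [uIcc_of_le zero_le_one] at hx
    push_cast
    rw [Complex.ofReal_cpow hx.1, Complex.ofReal_cpow (by linarith [hx.2])]
    push_cast
    ring_nf
  rw [show realBeta a b = ProbabilityTheory.beta a b from rfl,
    ProbabilityTheory.beta_eq_betaIntegralReal a b ha hb, h, Complex.ofReal_re]

lemma integral_one_sub_sq_rpow {α : ℝ} (hα : 0 < α) :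
    ∫ u in (0:ℝ)..1, (1 - u ^ 2) ^ (α - 1) = realBeta α (1 / 2) / 2 := by
  have himage : (fun u : ℝ => u ^ 2) '' Ioc 0 1 = Ioc 0 1 := by
    refine Subset.antisymm ?_ fun y hy =>
      ⟨√y, ⟨sqrt_pos.2 hy.1, sqrt_le_one.2 hy.2⟩, sq_sqrt hy.1.le⟩
    rintro _ ⟨u, hu, rfl⟩
    exact ⟨pow_pos hu.1 2, pow_le_one₀ hu.1.le hu.2⟩
  have hsubst := integral_image_eq_integral_abs_deriv_smul (s := Ioc 0 1)
    (f' := fun u => 2 * u) measurableSet_Ioc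
    (fun u _ => by simpa using (hasDerivAt_pow 2 u).hasDerivWithinAt)
    ((pow_left_strictMonoOn₀ two_ne_zero).injOn.mono fun u hu => le_of_lt hu.1)
    (fun x => x ^ ((1:ℝ) / 2 - 1) * (1 - x) ^ (α - 1))
  rw [himage, ← integral_of_le zero_le_one, integral_rpow_mul_one_sub_rpow one_half_pos hα,
    ← integral_of_le zero_le_one] at hsubst
  have hintegrand : ∀ᵐ u : ℝ, u ∈ uIoc 0 1 →
      |2 * u| • ((u ^ 2) ^ ((1:ℝ) / 2 - 1) * (1 - u ^ 2) ^ (α - 1))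
        = 2 * (1 - u ^ 2) ^ (α - 1) :=
    .of_forall fun u hu => by
      rw [uIoc_of_le zero_le_one] at hu
      rw [← rpow_natCast, ← rpow_mul hu.1.le, abs_of_pos (by linarith [hu.1]), smul_eq_mul]
      norm_num [rpow_neg_one]
      field_simp [hu.1.ne']
  rw [integral_congr_ae hintegrand, intervalIntegral.integral_const_mul] at hsubst
  rw [show realBeta α (1 / 2) = realBeta (1 / 2) α by simp only [realBeta, mul_comm, add_comm],
    hsubst]
  ring

lemma hasDerivAt_integral_mul_of_continuous {ρ : ℝ → ℝ} {a b : ℝ}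
    (hρ : IntervalIntegrable ρ volume a b) {F F' : ℝ → ℝ → ℝ}
    (hF : ∀ p, Continuous (F p)) (hF' : Continuous (uncurry F'))
    (hderiv : ∀ p u, HasDerivAt (F · u) (F' p u) p) (p₀ : ℝ) :
    HasDerivAt (fun p => ∫ u in a..b, ρ u * F p u) (∫ u in a..b, ρ u * F' p₀ u) p₀ := by
  obtain ⟨M, hM⟩ :=
    ((isCompact_closedBall p₀ 1).prod isCompact_uIcc).exists_bound_of_continuousOn
      hF'.continuousOn
  have hρm := hρ.def'.aestronglyMeasurable
  refine (hasDerivAt_integral_of_dominated_loc_of_deriv_le (bound := fun u => ‖ρ u‖ * M)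
    (ball_mem_nhds p₀ one_pos) (.of_forall fun p => hρm.mul (hF p).aestronglyMeasurable)
    (hρ.mul_continuousOn (hF p₀).continuousOn)
    (hρm.mul (hF'.uncurry_left p₀).aestronglyMeasurable) (.of_forall fun u hu p hp => ?_)
    (hρ.norm.mul_const M) (.of_forall fun u _ p _ => (hderiv p u).const_mul (ρ u))).2
  rw [norm_mul]
  exact mul_le_mul_of_nonneg_left
    (hM (p, u) ⟨ball_subset_closedBall hp, uIoc_subset_uIcc hu⟩) (norm_nonneg _)

lemma hasDerivAt_integral_mul_comp_mul {ρ : ℝ → ℝ} {a b : ℝ}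
    (hρ : IntervalIntegrable ρ volume a b) {g g' : ℝ → ℝ}
    (hg : ∀ s, HasDerivAt g (g' s) s) (hg' : Continuous g') (t : ℝ) :
    HasDerivAt (fun t => ∫ u in a..b, ρ u * g (u * t))
      (∫ u in a..b, ρ u * u * g' (u * t)) t := by
  have hgc : Continuous g := continuous_iff_continuousAt.2 fun s => (hg s).continuousAt
  simp only [mul_assoc]
  exact hasDerivAt_integral_mul_of_continuous hρ (F' := fun p u => u * g' (u * p))
    (fun p => by fun_prop) (by fun_prop)
    (fun p u => ((hg (u * p)).comp p ((hasDerivAt_id p).const_mul u)).congr_deriv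
      (by simp [mul_comm]))
    t

lemma integral_one_sub_sq_rpow_mul_deriv {α : ℝ} (hα : 0 < α) {g g' : ℝ → ℝ}
    (hg : ∀ s, HasDerivAt g (g' s) s) (hg' : Continuous g') (t : ℝ) :
    t * ∫ u in (0:ℝ)..1, (1 - u ^ 2) ^ α * g' (u * t)
      = 2 * α * (∫ u in (0:ℝ)..1, (1 - u ^ 2) ^ (α - 1) * u * g (u * t)) - g 0 := by
  have hgc : Continuous g := continuous_iff_continuousAt.2 fun s => (hg s).continuousAt
  have hpow : Continuous fun u : ℝ => (1 - u ^ 2) ^ α :=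
    continuous_iff_continuousAt.2 fun u => by fun_prop (disch := exact Or.inr hα.le)
  have hderiv : ∀ u ∈ Ioo (0:ℝ) 1, HasDerivAt (fun u => (1 - u ^ 2) ^ α * g (u * t))
      (-(2 * α) * ((1 - u ^ 2) ^ (α - 1) * u * g (u * t)) + t * ((1 - u ^ 2) ^ α * g' (u * t)))
      u := by
    intro u hu
    have hbase : 1 - u ^ 2 ≠ 0 := by nlinarith [hu.1, hu.2]
    have := (((hasDerivAt_pow 2 u).const_sub 1).rpow_const (p := α) (Or.inl hbase)).mul
      ((hg (u * t)).comp u ((hasDerivAt_id u).mul_const t))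
    exact this.congr_deriv (by simp; ring)
  have hint₁ :
      IntervalIntegrable (fun u => (1 - u ^ 2) ^ (α - 1) * u * g (u * t)) volume 0 1 := by
    simp only [mul_assoc]
    exact (intervalIntegrable_one_sub_sq_rpow hα).mul_continuousOn (by fun_prop)
  have hint₂ : IntervalIntegrable (fun u => (1 - u ^ 2) ^ α * g' (u * t)) volume 0 1 :=
    (hpow.mul (by fun_prop)).intervalIntegrable 0 1
  have hftc := integral_eq_sub_of_hasDerivAt_of_le zero_le_one
    (hpow.mul (by fun_prop)).continuousOn hderiv ((hint₁.const_mul _).add (hint₂.const_mul _))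
  rw [integral_add (hint₁.const_mul _) (hint₂.const_mul _), intervalIntegral.integral_const_mul,
    intervalIntegral.integral_const_mul] at hftc
  norm_num [zero_rpow hα.ne'] at hftc
  linarith

noncomputable def erdelyiKoberIntegral (α : ℝ) (g : ℝ → ℝ) (t : ℝ) : ℝ :=
  ∫ u in (0:ℝ)..1, (1 - u ^ 2) ^ (α - 1) * g (u * t)

lemma erdelyiKoberIntegral_eulerPoissonDarboux {α : ℝ} (hα : 0 < α) {g : ℝ → ℝ} (hg : ContDiff ℝ 2 g)
    (hg₀ : deriv g 0 = 0) {t : ℝ} (ht : t ≠ 0) :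
    deriv (deriv (erdelyiKoberIntegral α g)) t + 2 * α / t * deriv (erdelyiKoberIntegral α g) t
      = erdelyiKoberIntegral α (deriv (deriv g)) t := by
  have hg' : ContDiff ℝ 1 (deriv g) := hg.deriv'
  have hg₁ : ∀ s, HasDerivAt g (deriv g s) s := fun s =>
    (hg.differentiable two_ne_zero s).hasDerivAt
  have hg₂ : ∀ s, HasDerivAt (deriv g) (deriv (deriv g) s) s := fun s =>
    (hg'.differentiable one_ne_zero s).hasDerivAt
  have hg'' : Continuous (deriv (deriv g)) := hg'.continuous_deriv le_rfl
  have hρ := intervalIntegrable_one_sub_sq_rpow hα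
  have hd₁ : deriv (erdelyiKoberIntegral α g)
      = fun t => ∫ u in (0:ℝ)..1, (1 - u ^ 2) ^ (α - 1) * u * deriv g (u * t) :=
    funext fun t => (hasDerivAt_integral_mul_comp_mul hρ hg₁ hg'.continuous t).deriv
  have hd₂ : deriv (deriv (erdelyiKoberIntegral α g)) t
      = ∫ u in (0:ℝ)..1, (1 - u ^ 2) ^ (α - 1) * u * u * deriv (deriv g) (u * t) := by
    rw [hd₁]
    exact (hasDerivAt_integral_mul_comp_mul (hρ.mul_continuousOn continuousOn_id)
      hg₂ hg'' t).deriv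
  have hsplit : erdelyiKoberIntegral α (deriv (deriv g)) t
      - ∫ u in (0:ℝ)..1, (1 - u ^ 2) ^ (α - 1) * u * u * deriv (deriv g) (u * t)
      = ∫ u in (0:ℝ)..1, (1 - u ^ 2) ^ α * deriv (deriv g) (u * t) := by
    have hint₁ : IntervalIntegrable (fun u => (1 - u ^ 2) ^ (α - 1) * deriv (deriv g) (u * t))
        volume 0 1 := hρ.mul_continuousOn (by fun_prop)
    have hint₂ : IntervalIntegrable
        (fun u => (1 - u ^ 2) ^ (α - 1) * u * u * deriv (deriv g) (u * t)) volume 0 1 := by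
      simp only [mul_assoc]
      exact hρ.mul_continuousOn (by fun_prop)
    rw [erdelyiKoberIntegral, ← integral_sub hint₁ hint₂]
    refine integral_congr fun u hu => ?_
    rw [uIcc_of_le zero_le_one] at hu
    have hpow := rpow_add_one' (x := 1 - u ^ 2) (y := α - 1) (by nlinarith [hu.1, hu.2])
      (by simpa using hα.ne')
    rw [sub_add_cancel] at hpow
    simp only [hpow]
    ring
  have hibp := integral_one_sub_sq_rpow_mul_deriv hα hg₂ hg'' t
  rw [← hsplit, hg₀, sub_zero] at hibp
  rw [hd₂, hd₁]
  beta_reduce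
  rw [div_mul_eq_mul_div, ← hibp, mul_div_cancel_left₀ _ ht]
  ring

lemma hasDerivAt_erdelyiKoberIntegral_param {α : ℝ} (hα : 0 < α) {W W' : ℝ → ℝ → ℝ}
    (hW : ∀ p, Continuous (W p)) (hW' : Continuous (uncurry W'))
    (hderiv : ∀ p s, HasDerivAt (W · s) (W' p s) p) (t p₀ : ℝ) :
    HasDerivAt (fun p => erdelyiKoberIntegral α (W p) t)
      (erdelyiKoberIntegral α (W' p₀) t) p₀ :=
  hasDerivAt_integral_mul_of_continuous (intervalIntegrable_one_sub_sq_rpow hα)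
    (F := fun p u => W p (u * t)) (F' := fun p u => W' p (u * t))
    (fun p => (hW p).comp (by fun_prop))
    (hW'.comp (by fun_prop : Continuous fun q : ℝ × ℝ => (q.1, q.2 * t)))
    (fun p u => hderiv p (u * t)) p₀

lemma erdelyiKoberIntegral_const_mul (α k : ℝ) (g : ℝ → ℝ) (t : ℝ) :
    erdelyiKoberIntegral α (fun s => k * g s) t = k * erdelyiKoberIntegral α g t := by
  rw [erdelyiKoberIntegral, erdelyiKoberIntegral, ← intervalIntegral.integral_const_mul]
  exact integral_congr fun u _ => by ring

lemma erdelyiKoberIntegral_zero {α : ℝ} (hα : 0 < α) (g : ℝ → ℝ) :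
    erdelyiKoberIntegral α g 0 = realBeta α (1 / 2) / 2 * g 0 := by
  simp only [erdelyiKoberIntegral, mul_zero, intervalIntegral.integral_mul_const,
    integral_one_sub_sq_rpow hα]

noncomputable def dAlembert (c : ℝ) (f : ℝ → ℝ) (x s : ℝ) : ℝ :=
  (f (x + c * s) + f (x - c * s)) / 2

lemma continuous_dAlembert (c : ℝ) {f : ℝ → ℝ} (hf : Continuous f) :
    Continuous (uncurry (dAlembert c f)) := by
  unfold dAlembert
  fun_prop

lemma hasDerivAt_dAlembert_fst (c : ℝ) {f : ℝ → ℝ} (hf : Differentiable ℝ f) (x s : ℝ) :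
    HasDerivAt (dAlembert c f · s) (dAlembert c (deriv f) x s) x :=
  ((((hf _).hasDerivAt.comp x ((hasDerivAt_id x).add_const _)).add
    ((hf _).hasDerivAt.comp x ((hasDerivAt_id x).sub_const _))).div_const 2).congr_deriv
    (by simp [dAlembert])

lemma hasDerivAt_dAlembert_snd (c : ℝ) {f : ℝ → ℝ} (hf : Differentiable ℝ f) (x s : ℝ) :
    HasDerivAt (dAlembert c f x) (c * (deriv f (x + c * s) - deriv f (x - c * s)) / 2) s :=
  ((((hf _).hasDerivAt.comp s (((hasDerivAt_id s).const_mul c).const_add x)).add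
    ((hf _).hasDerivAt.comp s (((hasDerivAt_id s).const_mul c).const_sub x))).div_const
      2).congr_deriv (by simp; ring)

lemma deriv_deriv_dAlembert_snd (c : ℝ) {f : ℝ → ℝ} (hf : ContDiff ℝ 2 f) (x : ℝ) :
    deriv (deriv (dAlembert c f x)) = fun s => c ^ 2 * dAlembert c (deriv (deriv f)) x s := by
  have hf' : Differentiable ℝ (deriv f) := hf.deriv'.differentiable one_ne_zero
  have hd : deriv (dAlembert c f x)
      = fun s => c * (deriv f (x + c * s) - deriv f (x - c * s)) / 2 :=
    funext fun s => (hasDerivAt_dAlembert_snd c (hf.differentiable two_ne_zero) x s).deriv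
  rw [hd]
  funext s
  exact ((((hf' _).hasDerivAt.comp s (((hasDerivAt_id s).const_mul c).const_add x)).sub
    ((hf' _).hasDerivAt.comp s (((hasDerivAt_id s).const_mul c).const_sub x))).const_mul c
    |>.div_const 2).congr_deriv (by simp [dAlembert]; ring) |>.deriv

lemma deriv_erdelyiKoberIntegral_dAlembert_fst {α : ℝ} (hα : 0 < α) (c : ℝ) {f : ℝ → ℝ}
    (hf : ContDiff ℝ 1 f) (t : ℝ) :
    deriv (fun x => erdelyiKoberIntegral α (dAlembert c f x) t)
      = fun x => erdelyiKoberIntegral α (dAlembert c (deriv f) x) t :=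
  funext fun x => (hasDerivAt_erdelyiKoberIntegral_param hα
    (fun p => (continuous_dAlembert c hf.continuous).uncurry_left p)
    (continuous_dAlembert c (hf.continuous_deriv le_rfl))
    (hasDerivAt_dAlembert_fst c (hf.differentiable one_ne_zero)) t x).deriv

theorem erdelyiKober_dAlembert_solves_EPD_general (α c : ℝ) (hα : 0 < α)
    (f : ℝ → ℝ) (hf : ContDiff ℝ 2 f)
    (w : ℝ → ℝ → ℝ) (hw : ∀ x t, w x t = (f (x + c * t) + f (x - c * t)) / 2)
    (v : ℝ → ℝ → ℝ)
    (hv : ∀ x t, v x t =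
      2 / realBeta α (1 / 2) * ∫ u in (0:ℝ)..1, (1 - u ^ 2) ^ (α - 1) * w x (u * t)) :
    (∀ x t, 0 < t →
      deriv (fun s => deriv (fun r => v x r) s) t + (2 * α / t) * deriv (fun r => v x r) t
        = c ^ 2 * deriv (fun s => deriv (fun r => v r t) s) x) ∧
    (∀ x, v x 0 = f x) := by
  obtain rfl : w = dAlembert c f := funext fun x => funext (hw x)
  obtain rfl :
      v = fun x t => 2 / realBeta α (1 / 2) * erdelyiKoberIntegral α (dAlembert c f x) t :=
    funext fun x => funext (hv x)
  refine ⟨fun x t ht => ?_, fun x => ?_⟩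
  · have hw₀ : deriv (dAlembert c f x) 0 = 0 := by
      simp [(hasDerivAt_dAlembert_snd c (hf.differentiable two_ne_zero) x 0).deriv]
    simp only [deriv_const_mul_field', deriv_erdelyiKoberIntegral_dAlembert_fst hα c hf.of_succ,
      deriv_erdelyiKoberIntegral_dAlembert_fst hα c hf.deriv']
    rw [mul_left_comm, ← mul_add,
      erdelyiKoberIntegral_eulerPoissonDarboux hα (by unfold dAlembert; fun_prop) hw₀ ht.ne',
      deriv_deriv_dAlembert_snd c hf, erdelyiKoberIntegral_const_mul]
    ring
  · have hB : 0 < realBeta α (1 / 2) := ProbabilityTheory.beta_pos hα one_half_pos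
    simp only [erdelyiKoberIntegral_zero hα, dAlembert, mul_zero, add_zero, sub_zero]
    field_simp
    ring

/-- the Erdélyi–Kober average of the D'Alembert solution solves the
Euler–Poisson–Darboux equation, and has initial datum `f`. -/
theorem erdelyiKober_dAlembert_solves_EPD (α c : ℝ) (hα : 0 < α) (hc : 0 < c)
    (f : ℝ → ℝ) (hf : ContDiff ℝ 2 f)
    (w : ℝ → ℝ → ℝ) (hw : ∀ x t, w x t = (f (x + c * t) + f (x - c * t)) / 2)
    (v : ℝ → ℝ → ℝ)
    (hv : ∀ x t, v x t =
      2 / realBeta α (1 / 2) * ∫ u in (0:ℝ)..1, (1 - u ^ 2) ^ (α - 1) * w x (u * t)) :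
    (∀ x t, 0 < t →
      deriv (fun s => deriv (fun r => v x r) s) t + (2 * α / t) * deriv (fun r => v x r) t
        = c ^ 2 * deriv (fun s => deriv (fun r => v r t) s) x) ∧
    (∀ x, v x 0 = f x) :=
  erdelyiKober_dAlembert_solves_EPD_general α c hα f hf w hw v hv
end

section
/- For γ > 0, c > 0, d ≥ 1, the function p(x,t) = Γ(γ + d/2)/(π^{d/2}Γ(γ)) · (ct)^{-(d-2+2γ)} · (c²t² - ‖x‖²)^{γ-1} satisfies the d-dimensional Euler–Poisson–Darboux equation ∂²p/∂t² + ((d + 2γ - 1)/t)·∂p/∂t = c²·Δp at every point (x,t) with t > 0 and ‖x‖ < ct. -/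
open Filter Topology

/-! Every factor of `p` is a real power, so each first derivative is `p` times a logarithmic
derivative `g`, and then the second derivative is `p * (g ^ 2 + g')`. At a point of the cone
both sides of the equation become `p x t` times a rational function of `t`, `‖x‖ ^ 2`, `d`
and `γ` (the coordinate sum of `x j ^ 2` collapsing to `‖x‖ ^ 2`), and these agree. -/

theorem HasDerivAt.rpow_const_eq_mul_logDeriv {u : ℝ → ℝ} {u' y β : ℝ}
    (hu : HasDerivAt u u' y) (hy : u y ≠ 0) :
    HasDerivAt (fun z => u z ^ β) (u y ^ β * (β * u' / u y)) y := by
  convert hu.rpow_const (p := β) (Or.inl hy) using 1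
  rw [Real.rpow_sub_one hy]; ring

theorem deriv_deriv_eq_mul_of_hasDerivAt_mul {f g : ℝ → ℝ} {y g' : ℝ}
    (hf : ∀ᶠ z in 𝓝 y, HasDerivAt f (f z * g z) z) (hg : HasDerivAt g g' y) :
    deriv (deriv f) y = f y * (g y ^ 2 + g') := by
  have hdf : deriv f =ᶠ[𝓝 y] fun z => f z * g z := hf.mono fun z hz => hz.deriv
  rw [hdf.deriv_eq]
  exact (hf.self_of_nhds.mul hg).deriv.trans (by ring)

theorem EuclideanSpace.norm_toLp_update_sq {ι : Type*} [Fintype ι] [DecidableEq ι]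
    (x : EuclideanSpace ℝ ι) (j : ι) (s : ℝ) :
    ‖(WithLp.toLp 2 (Function.update x j s) : EuclideanSpace ℝ ι)‖ ^ 2 =
      ‖x‖ ^ 2 - x j ^ 2 + s ^ 2 := by
  simp only [EuclideanSpace.norm_sq_eq, Real.norm_eq_abs, sq_abs,
    Function.apply_update (fun _ v => v ^ 2) x.ofLp j s]
  rw [Finset.sum_update_of_mem (Finset.mem_univ j),
    Finset.sum_eq_add_sum_sdiff_singleton_of_mem (Finset.mem_univ j) (fun i => x i ^ 2)]
  ring

section QuadraticPower

variable (a b β : ℝ) {s : ℝ}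

theorem hasDerivAt_quadratic_rpow (h : a * s ^ 2 - b ≠ 0) :
    HasDerivAt (fun s => (a * s ^ 2 - b) ^ β)
      ((a * s ^ 2 - b) ^ β * (2 * a * β * s / (a * s ^ 2 - b))) s := by
  have hv : HasDerivAt (fun s => a * s ^ 2 - b) (a * (2 * s)) s := by
    simpa using ((hasDerivAt_pow 2 s).const_mul a).sub_const b
  convert hv.rpow_const_eq_mul_logDeriv h using 2
  ring

theorem hasDerivAt_quadratic_logDeriv (h : a * s ^ 2 - b ≠ 0) :
    HasDerivAt (fun s => 2 * a * β * s / (a * s ^ 2 - b))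
      (-2 * a * β * (a * s ^ 2 + b) / (a * s ^ 2 - b) ^ 2) s := by
  have hv : HasDerivAt (fun s => a * s ^ 2 - b) (a * (2 * s)) s := by
    simpa using ((hasDerivAt_pow 2 s).const_mul a).sub_const b
  refine (((hasDerivAt_id' s).const_mul (2 * a * β)).fun_div hv h).congr_deriv ?_
  field_simp
  ring

theorem deriv_deriv_const_mul_quadratic_rpow (A : ℝ) (h : a * s ^ 2 - b ≠ 0) :
    deriv (deriv fun s => A * (a * s ^ 2 - b) ^ β) s = A * (a * s ^ 2 - b) ^ β *
      (2 * a * β / (a * s ^ 2 - b) + 4 * a ^ 2 * β * (β - 1) / (a * s ^ 2 - b) ^ 2 * s ^ 2) := by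
  have hev : ∀ᶠ z in 𝓝 s, a * z ^ 2 - b ≠ 0 :=
    (show ContinuousAt (fun z => a * z ^ 2 - b) s by fun_prop).eventually_ne h
  rw [deriv_deriv_eq_mul_of_hasDerivAt_mul (g := fun s => 2 * a * β * s / (a * s ^ 2 - b))
    (hev.mono fun z hz => by
      simpa [mul_assoc] using (hasDerivAt_quadratic_rpow a b β hz).const_mul A)
    (hasDerivAt_quadratic_logDeriv a b β h)]
  field_simp
  ring

end QuadraticPower

theorem EuclideanSpace.deriv_deriv_update_const_mul_sub_norm_sq_rpow {ι : Type*} [Fintype ι]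
    [DecidableEq ι] (A B β : ℝ) (x : EuclideanSpace ℝ ι) (j : ι) (h : B - ‖x‖ ^ 2 ≠ 0) :
    deriv (deriv fun s => A * (B - ‖(WithLp.toLp 2 (Function.update x j s) :
        EuclideanSpace ℝ ι)‖ ^ 2) ^ β) (x j) =
      A * (B - ‖x‖ ^ 2) ^ β *
        (-2 * β / (B - ‖x‖ ^ 2) + 4 * β * (β - 1) / (B - ‖x‖ ^ 2) ^ 2 * x j ^ 2) := by
  have hline : (fun s => A * (B - ‖(WithLp.toLp 2 (Function.update x j s) :
      EuclideanSpace ℝ ι)‖ ^ 2) ^ β) =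
        fun s => A * (-1 * s ^ 2 - (‖x‖ ^ 2 - x j ^ 2 - B)) ^ β := by
    funext s
    rw [EuclideanSpace.norm_toLp_update_sq]
    congr 2
    ring
  have hbase : -1 * x j ^ 2 - (‖x‖ ^ 2 - x j ^ 2 - B) = B - ‖x‖ ^ 2 := by ring
  rw [hline, deriv_deriv_const_mul_quadratic_rpow _ _ _ _ (by rwa [hbase]), hbase]
  ring

theorem hasDerivAt_const_mul_rpow (c α : ℝ) {r : ℝ} (h : c * r ≠ 0) :
    HasDerivAt (fun r => (c * r) ^ α) ((c * r) ^ α * (α / r)) r := by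
  convert ((hasDerivAt_id' r).const_mul c).rpow_const_eq_mul_logDeriv h using 2
  field_simp [left_ne_zero_of_mul h, right_ne_zero_of_mul h]

section LinearTimesQuadraticPower

variable (K c α a b β : ℝ) {r : ℝ}

theorem hasDerivAt_linear_rpow_mul_quadratic_rpow (hr : c * r ≠ 0) (hq : a * r ^ 2 - b ≠ 0) :
    HasDerivAt (fun r => K * (c * r) ^ α * (a * r ^ 2 - b) ^ β)
      (K * (c * r) ^ α * (a * r ^ 2 - b) ^ β *
        (α / r + 2 * a * β * r / (a * r ^ 2 - b))) r := by
  refine (((hasDerivAt_const_mul_rpow c α hr).const_mul K).fun_mul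
    (hasDerivAt_quadratic_rpow a b β hq)).congr_deriv ?_
  ring

theorem deriv_deriv_linear_rpow_mul_quadratic_rpow (hr : c * r ≠ 0) (hq : a * r ^ 2 - b ≠ 0) :
    deriv (deriv fun r => K * (c * r) ^ α * (a * r ^ 2 - b) ^ β) r =
      K * (c * r) ^ α * (a * r ^ 2 - b) ^ β * ((α / r + 2 * a * β * r / (a * r ^ 2 - b)) ^ 2 +
        (-α / r ^ 2 - 2 * a * β * (a * r ^ 2 + b) / (a * r ^ 2 - b) ^ 2)) := by
  have hev : ∀ᶠ z in 𝓝 r, c * z ≠ 0 ∧ a * z ^ 2 - b ≠ 0 :=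
    (show ContinuousAt (fun z => c * z) r by fun_prop).eventually_ne hr |>.and
      ((show ContinuousAt (fun z => a * z ^ 2 - b) r by fun_prop).eventually_ne hq)
  have hinv : HasDerivAt (fun r => α / r) (-α / r ^ 2) r := by
    refine ((hasDerivAt_const r α).fun_div (hasDerivAt_id' r)
      (right_ne_zero_of_mul hr)).congr_deriv ?_
    ring
  exact deriv_deriv_eq_mul_of_hasDerivAt_mul
    (hev.mono fun z hz => hasDerivAt_linear_rpow_mul_quadratic_rpow K c α a b β hz.1 hz.2)
    ((hinv.add (hasDerivAt_quadratic_logDeriv a b β hq)).congr_deriv (by ring))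

end LinearTimesQuadraticPower

theorem epd_density_solves_EPD_dim_d_general (d : ℕ) (γ c : ℝ)
    (p : EuclideanSpace ℝ (Fin d) → ℝ → ℝ)
    (hp : ∀ x t, p x t =
      Real.Gamma (γ + d / 2) / (Real.pi ^ ((d : ℝ) / 2) * Real.Gamma γ)
        * (c * t) ^ (-((d : ℝ) - 2 + 2 * γ)) * (c ^ 2 * t ^ 2 - ‖x‖ ^ 2) ^ (γ - 1))
    (x : EuclideanSpace ℝ (Fin d)) (t : ℝ) (hx : ‖x‖ < c * t) :
    deriv (fun r => deriv (fun r' => p x r') r) t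
      + ((d + 2 * γ - 1) / t) * deriv (fun r => p x r) t
      = c ^ 2 * ∑ j : Fin d,
          deriv (fun s => deriv (fun s' => p (WithLp.toLp 2 (Function.update x j s')) t) s) (x j) := by
  set K := Real.Gamma (γ + d / 2) / (Real.pi ^ ((d : ℝ) / 2) * Real.Gamma γ)
  set m := (d : ℝ) - 2 + 2 * γ
  have hct : 0 < c * t := (norm_nonneg x).trans_lt hx
  have hu : c ^ 2 * t ^ 2 - ‖x‖ ^ 2 ≠ 0 := by nlinarith [norm_nonneg x]
  have hsum : ∑ j : Fin d, x j ^ 2 = ‖x‖ ^ 2 := by simp [EuclideanSpace.norm_sq_eq]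
  simp only [hp, EuclideanSpace.deriv_deriv_update_const_mul_sub_norm_sq_rpow _ _ _ x _ hu]
  rw [(hasDerivAt_linear_rpow_mul_quadratic_rpow _ _ _ _ _ _ hct.ne' hu).deriv,
    deriv_deriv_linear_rpow_mul_quadratic_rpow _ _ _ _ _ _ hct.ne' hu,
    ← Finset.mul_sum, Finset.sum_add_distrib, ← Finset.mul_sum, hsum]
  simp only [Finset.sum_const, Finset.card_univ, Fintype.card_fin, nsmul_eq_mul, m]
  field_simp [right_ne_zero_of_mul hct.ne']
  ring

/-- the `d`-dimensional EPD fundamental density satisfies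
`∂²p/∂t² + ((d+2γ-1)/t) ∂p/∂t = c² Δp` inside the light cone. -/
theorem epd_density_solves_EPD_dim_d (d : ℕ) (hd : 1 ≤ d) (γ c : ℝ)
    (hγ : 0 < γ) (hc : 0 < c)
    (p : EuclideanSpace ℝ (Fin d) → ℝ → ℝ)
    (hp : ∀ x t, p x t =
      Real.Gamma (γ + d / 2) / (Real.pi ^ ((d : ℝ) / 2) * Real.Gamma γ)
        * (c * t) ^ (-((d : ℝ) - 2 + 2 * γ)) * (c ^ 2 * t ^ 2 - ‖x‖ ^ 2) ^ (γ - 1))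
    (x : EuclideanSpace ℝ (Fin d)) (t : ℝ) (ht : 0 < t) (hx : ‖x‖ < c * t) :
    deriv (fun r => deriv (fun r' => p x r') r) t
      + ((d + 2 * γ - 1) / t) * deriv (fun r => p x r) t
      = c ^ 2 * ∑ j : Fin d,
          deriv (fun s => deriv (fun s' => p (WithLp.toLp 2 (Function.update x j s')) t) s) (x j) :=
  epd_density_solves_EPD_dim_d_general d γ c p hp x t hx
end

section
/- Let p(x,t) = Γ(γ + d/2)/(π^{d/2}Γ(γ)) · (ct)^{-(d-2+2γ)} · (c²t² - ‖x‖²)^{γ-1} on the ball of radius ct in ℝ^d. Then for 1 ≤ m < d, the marginal density obtained by integrating out the last d - m coordinates equals Γ(γ + d/2)/(Γ(γ + (d-m)/2)·π^{m/2}) · (c²t² - ‖x_m‖²)^{γ - 1 + (d-m)/2} / (ct)^{2γ + d - 2}, for ‖x_m‖ < ct. -/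
/-!
With `S = c²t² - ‖x‖²` and `k = d - m`, the integrand is the radial function `(S - ‖y‖²)^(γ-1)` on
the ball of radius `√S` in `ℝ^k`. In polar coordinates it becomes the area `2π^(k/2)/Γ(k/2)` of the
unit sphere times `∫₀^√S r^(k-1) (S - r²)^(γ-1) dr`, and the substitution `u = r²` turns the latter
into the Beta integral `S^(k/2+γ-1) B(k/2, γ) / 2`. The Gamma factors then collapse to the stated
constant, the powers of `π` through `π^(d/2) = π^(k/2) π^(m/2)`.
-/

open Real MeasureTheory
open Set Metric Module ProbabilityTheory

theorem integral_rpow_mul_one_sub_rpow_s16 {p q : ℝ} (hp : 0 < p) (hq : 0 < q) :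
    ∫ u in (0 : ℝ)..1, u ^ (p - 1) * (1 - u) ^ (q - 1) = beta p q := by
  have h := Complex.Gamma_mul_Gamma_eq_betaIntegral (s := p) (t := q)
    (by simpa using hp) (by simpa using hq)
  have hcoe : Complex.betaIntegral p q
      = ((∫ u in (0 : ℝ)..1, u ^ (p - 1) * (1 - u) ^ (q - 1) : ℝ) : ℂ) := by
    rw [Complex.betaIntegral, ← intervalIntegral.integral_ofReal]
    refine intervalIntegral.integral_congr fun u hu => ?_
    rw [uIcc_of_le zero_le_one] at hu
    push_cast
    rw [Complex.ofReal_cpow hu.1, Complex.ofReal_cpow (sub_nonneg.2 hu.2)]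
    push_cast
    ring
  rw [hcoe, ← Complex.ofReal_add, Complex.Gamma_ofReal, Complex.Gamma_ofReal,
    Complex.Gamma_ofReal, ← Complex.ofReal_mul, ← Complex.ofReal_mul] at h
  rw [beta, Complex.ofReal_injective h,
    mul_div_cancel_left₀ _ (Gamma_pos_of_pos (add_pos hp hq)).ne']

theorem integral_rpow_mul_sub_rpow {p q S : ℝ} (hp : 0 < p) (hq : 0 < q) (hS : 0 < S) :
    ∫ u in (0 : ℝ)..S, u ^ (p - 1) * (S - u) ^ (q - 1) = S ^ (p + q - 1) * beta p q := by
  have hscale := intervalIntegral.smul_integral_comp_mul_left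
    (fun u => u ^ (p - 1) * (S - u) ^ (q - 1)) S (a := 0) (b := 1)
  rw [mul_zero, mul_one] at hscale
  rw [← hscale, ← integral_rpow_mul_one_sub_rpow_s16 hp hq, smul_eq_mul,
    ← intervalIntegral.integral_const_mul, ← intervalIntegral.integral_const_mul]
  refine intervalIntegral.integral_congr fun u hu => ?_
  rw [uIcc_of_le zero_le_one] at hu
  have hsplit : S ^ (p + q - 1) = S * S ^ (p - 1) * S ^ (q - 1) := by
    rw [show p + q - 1 = 1 + (p - 1) + (q - 1) by ring, rpow_add hS, rpow_add hS, rpow_one]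
  rw [show S - S * u = S * (1 - u) by ring, mul_rpow hS.le hu.1,
    mul_rpow hS.le (sub_nonneg.2 hu.2), hsplit]
  ring

theorem integral_Ioo_pow_mul_sq_sub_sq_rpow {k : ℕ} (hk : k ≠ 0) {γ R : ℝ} (hγ : 0 < γ)
    (hR : 0 < R) :
    ∫ r in Ioo 0 R, r ^ (k - 1) * (R ^ 2 - r ^ 2) ^ (γ - 1)
      = (R ^ 2) ^ ((k : ℝ) / 2 + γ - 1) / 2 * beta (k / 2) γ := by
  have himage : (fun r : ℝ => r ^ 2) '' Ioo 0 R = Ioo 0 (R ^ 2) := by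
    simpa using (continuous_pow 2).continuousOn.image_Ioo_of_strictMonoOn hR.le
      ((pow_left_strictMonoOn₀ two_ne_zero).mono Icc_subset_Ici_self)
  have hsubst := integral_image_eq_integral_abs_deriv_smul (measurableSet_Ioo (a := 0) (b := R))
    (f' := fun r => 2 * r) (fun r _ => by simpa using (hasDerivAt_pow 2 r).hasDerivWithinAt)
    ((pow_left_strictMonoOn₀ two_ne_zero).injOn.mono fun _ hr => mem_Ici.2 hr.1.le)
    (fun u => u ^ ((k : ℝ) / 2 - 1) * (R ^ 2 - u) ^ (γ - 1))
  rw [himage, ← integral_Ioc_eq_integral_Ioo, ← intervalIntegral.integral_of_le (by positivity),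
    integral_rpow_mul_sub_rpow (by positivity) hγ (by positivity)] at hsubst
  rw [div_mul_eq_mul_div, hsubst, eq_div_iff two_ne_zero, ← integral_mul_const]
  refine setIntegral_congr_fun measurableSet_Ioo fun r hr => ?_
  have hpow : (r ^ 2) ^ ((k : ℝ) / 2 - 1) * r = r ^ (k - 1) := by
    rw [← rpow_natCast_mul hr.1.le, ← rpow_natCast, Nat.cast_sub (Nat.one_le_iff_ne_zero.2 hk),
      ← rpow_add_one hr.1.ne']
    congr 1
    push_cast
    ring
  rw [smul_eq_mul, abs_of_pos (mul_pos two_pos hr.1), ← hpow]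
  ring

section InnerProductSpace

variable {E : Type*} [NormedAddCommGroup E] [InnerProductSpace ℝ E] [FiniteDimensional ℝ E]
  [MeasurableSpace E] [BorelSpace E] [Nontrivial E]

theorem finrank_mul_volume_real_ball_zero_one :
    finrank ℝ E * volume.real (ball (0 : E) 1)
      = 2 * π ^ ((finrank ℝ E : ℝ) / 2) / Gamma (finrank ℝ E / 2) := by
  have hk : (0 : ℝ) < finrank ℝ E := by exact_mod_cast finrank_pos
  rw [measureReal_def, InnerProductSpace.volume_ball, ENNReal.ofReal_one, one_pow, one_mul,
    ENNReal.toReal_ofReal (by positivity), sqrt_eq_rpow, ← rpow_mul_natCast pi_pos.le,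
    Gamma_add_one (by positivity)]
  field_simp

theorem integral_ball_fun_norm (f : ℝ → ℝ) (R : ℝ) :
    ∫ y in ball (0 : E) R, f ‖y‖
      = 2 * π ^ ((finrank ℝ E : ℝ) / 2) / Gamma (finrank ℝ E / 2)
        * ∫ r in Ioo 0 R, r ^ (finrank ℝ E - 1) * f r := by
  have hball : ball (0 : E) R = (‖·‖) ⁻¹' Iio R := by ext; simp
  have hind : ((‖·‖) ⁻¹' Iio R).indicator (fun y : E => f ‖y‖)
      = fun y => (Iio R).indicator f ‖y‖ := funext fun y => indicator_comp_right (‖·‖)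
  rw [← integral_indicator measurableSet_ball, hball, hind, integral_fun_norm_addHaar volume,
    nsmul_eq_mul, smul_eq_mul, ← mul_assoc, finrank_mul_volume_real_ball_zero_one]
  simp_rw [← indicator_smul, smul_eq_mul]
  rw [setIntegral_indicator measurableSet_Iio, Ioi_inter_Iio]

theorem integral_ball_sqrt_sub_norm_sq_rpow {γ S : ℝ} (hγ : 0 < γ) (hS : 0 < S) :
    ∫ y in ball (0 : E) √S, (S - ‖y‖ ^ 2) ^ (γ - 1)
      = π ^ ((finrank ℝ E : ℝ) / 2) * Gamma γ / Gamma (γ + finrank ℝ E / 2)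
        * S ^ (γ - 1 + finrank ℝ E / 2) := by
  obtain ⟨R, hR, rfl⟩ : ∃ R > 0, R ^ 2 = S := ⟨√S, sqrt_pos.2 hS, sq_sqrt hS.le⟩
  have hk : (0 : ℝ) < finrank ℝ E := by exact_mod_cast finrank_pos
  rw [sqrt_sq hR.le, integral_ball_fun_norm (fun r => (R ^ 2 - r ^ 2) ^ (γ - 1)),
    integral_Ioo_pow_mul_sq_sub_sq_rpow finrank_pos.ne' hγ hR, beta, add_comm γ,
    show γ - 1 + finrank ℝ E / 2 = finrank ℝ E / 2 + γ - 1 by ring]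
  have := (Gamma_pos_of_pos (half_pos hk)).ne'
  have := (Gamma_pos_of_pos (add_pos (half_pos hk) hγ)).ne'
  field_simp

end InnerProductSpace

theorem epd_density_marginal_general (d m : ℕ) (hmd : m < d) (γ c t : ℝ)
    (hγ : 0 < γ)
    (x : EuclideanSpace ℝ (Fin m)) (hx : ‖x‖ < c * t) :
    ∫ y in Metric.ball (0 : EuclideanSpace ℝ (Fin (d - m)))
        (Real.sqrt (c ^ 2 * t ^ 2 - ‖x‖ ^ 2)),
      Real.Gamma (γ + d / 2) / (Real.pi ^ ((d : ℝ) / 2) * Real.Gamma γ)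
        * (c * t) ^ (-((d : ℝ) - 2 + 2 * γ))
        * (c ^ 2 * t ^ 2 - ‖x‖ ^ 2 - ‖y‖ ^ 2) ^ (γ - 1)
      = Real.Gamma (γ + d / 2)
          / (Real.Gamma (γ + ((d : ℝ) - m) / 2) * Real.pi ^ ((m : ℝ) / 2))
        * (c ^ 2 * t ^ 2 - ‖x‖ ^ 2) ^ (γ - 1 + ((d : ℝ) - m) / 2)
        / (c * t) ^ (2 * γ + (d : ℝ) - 2) := by
  have hct : 0 < c * t := (norm_nonneg x).trans_lt hx
  have hS : 0 < c ^ 2 * t ^ 2 - ‖x‖ ^ 2 := by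
    rw [← mul_pow, sub_pos]
    exact pow_lt_pow_left₀ hx (norm_nonneg x) two_ne_zero
  have : Nonempty (Fin (d - m)) := ⟨⟨0, Nat.sub_pos_of_lt hmd⟩⟩
  have hk : (finrank ℝ (EuclideanSpace ℝ (Fin (d - m))) : ℝ) = d - m := by
    rw [finrank_euclideanSpace_fin, Nat.cast_sub hmd.le]
  rw [integral_const_mul, integral_ball_sqrt_sub_norm_sq_rpow hγ hS, hk,
    rpow_neg hct.le, show (d : ℝ) - 2 + 2 * γ = 2 * γ + d - 2 by ring,
    show (d : ℝ) / 2 = (d - m) / 2 + m / 2 by ring, rpow_add pi_pos]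
  have := (Gamma_pos_of_pos hγ).ne'
  have := (Gamma_pos_of_pos (show 0 < γ + ((d : ℝ) - m) / 2 by
    have : (m : ℝ) < d := by exact_mod_cast hmd
    linarith)).ne'
  field_simp

/-- the `m`-dimensional marginal of the `d`-dimensional EPD density, obtained
by integrating out the last `d - m` coordinates, has the same form with `γ` replaced by
`γ + (d-m)/2`. -/
theorem epd_density_marginal (d m : ℕ) (hm : 1 ≤ m) (hmd : m < d) (γ c t : ℝ)
    (hγ : 0 < γ) (hc : 0 < c) (ht : 0 < t)
    (x : EuclideanSpace ℝ (Fin m)) (hx : ‖x‖ < c * t) :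
    ∫ y in Metric.ball (0 : EuclideanSpace ℝ (Fin (d - m)))
        (Real.sqrt (c ^ 2 * t ^ 2 - ‖x‖ ^ 2)),
      Real.Gamma (γ + d / 2) / (Real.pi ^ ((d : ℝ) / 2) * Real.Gamma γ)
        * (c * t) ^ (-((d : ℝ) - 2 + 2 * γ))
        * (c ^ 2 * t ^ 2 - ‖x‖ ^ 2 - ‖y‖ ^ 2) ^ (γ - 1)
      = Real.Gamma (γ + d / 2)
          / (Real.Gamma (γ + ((d : ℝ) - m) / 2) * Real.pi ^ ((m : ℝ) / 2))
        * (c ^ 2 * t ^ 2 - ‖x‖ ^ 2) ^ (γ - 1 + ((d : ℝ) - m) / 2)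
        / (c * t) ^ (2 * γ + (d : ℝ) - 2) :=
  epd_density_marginal_general d m hmd γ c t hγ x hx
end

section
/- For c > 0, λ > 0, t > 0, the two-dimensional density q(x,y) = (λ/(2πc·sinh(λt))) · cosh((λ/c)√(c²t² - x² - y²)) / √(c²t² - x² - y²) integrates to 1 over the open disc {(x,y) : x² + y² < c²t²}. Equivalently, Σ_{n≥0} ∫∫_{x²+y²<c²t²} ((2n+1)/(2π(ct)^{2n+1}))·(c²t² - x² - y²)^{n - 1/2} dx dy · (2(λt)^{2n+1}e^{-λt}/((1-e^{-2λt})(2n+1)!)) = 1. -/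
open Real MeasureTheory Set
open scoped Nat

/-! In polar coordinates followed by the substitution `s = √(R² - r²)`, an involution of `(0, R)`,
the integral of `f (R² - x² - y²)` over the disc of radius `R` becomes `2π ∫₀ᴿ s f(s²) ds`; both
changes of variables hold for the Bochner integral with no integrability hypothesis. For the
closed-form density this leaves `∫₀ᴿ cosh (λ s / c) ds`, a multiple of `sinh (λ t)`. For the
`n`-th conditional density it leaves `∫₀ᴿ s²ⁿ ds`, so each has mass one, and the mixing weights
sum to one by the power series of `sinh`. -/

theorem setIntegral_disc_comp_sq_add_sq (g : ℝ → ℝ) {R : ℝ} (hR : 0 ≤ R) :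
    ∫ p in {p : ℝ × ℝ | p.1 ^ 2 + p.2 ^ 2 < R ^ 2}, g (p.1 ^ 2 + p.2 ^ 2)
      = 2 * π * ∫ r in Ioo 0 R, r * g (r ^ 2) := by
  have hdisc : MeasurableSet {p : ℝ × ℝ | p.1 ^ 2 + p.2 ^ 2 < R ^ 2} :=
    measurableSet_lt (by fun_prop) measurable_const
  rw [← integral_indicator hdisc, ← integral_comp_polarCoord_symm]
  have hpolar : ∀ p ∈ polarCoord.target,
      p.1 • {p : ℝ × ℝ | p.1 ^ 2 + p.2 ^ 2 < R ^ 2}.indicator (fun p ↦ g (p.1 ^ 2 + p.2 ^ 2))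
        (polarCoord.symm p) = (Ioo 0 R).indicator (fun r ↦ r * g (r ^ 2)) p.1 * 1 := by
    rintro ⟨r, θ⟩ ⟨hr, -⟩
    have hnorm : (r * cos θ) ^ 2 + (r * sin θ) ^ 2 = r ^ 2 := by
      linear_combination r ^ 2 * sin_sq_add_cos_sq θ
    have hlt : r ^ 2 < R ^ 2 ↔ r ∈ Ioo 0 R :=
      ⟨fun h ↦ ⟨hr, (pow_lt_pow_iff_left₀ hr.le hR two_ne_zero).1 h⟩,
        fun h ↦ pow_lt_pow_left₀ h.2 hr.le two_ne_zero⟩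
    simp only [polarCoord_symm_apply, indicator, mem_ofPred_eq, hnorm, hlt, smul_eq_mul,
      mul_one]
    split_ifs <;> simp
  rw [setIntegral_congr_fun polarCoord.open_target.measurableSet hpolar, polarCoord_target,
    Measure.volume_eq_prod,
    setIntegral_prod_mul ((Ioo 0 R).indicator fun r ↦ r * g (r ^ 2)) (fun _ ↦ (1 : ℝ)),
    setIntegral_const,
    Real.volume_real_Ioo_of_le (by linarith [pi_pos]), integral_indicator measurableSet_Ioo,
    Measure.restrict_restrict measurableSet_Ioo, Ioo_inter_Ioi, max_eq_left le_rfl]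
  simp only [smul_eq_mul, mul_one]
  ring

theorem setIntegral_Ioo_mul_comp_sq_sub_sq (f : ℝ → ℝ) (R : ℝ) :
    ∫ r in Ioo 0 R, r * f (R ^ 2 - r ^ 2) = ∫ s in Ioo 0 R, s * f (s ^ 2) := by
  set ρ : ℝ → ℝ := fun r ↦ √(R ^ 2 - r ^ 2)
  have hpos : ∀ r ∈ Ioo 0 R, 0 < R ^ 2 - r ^ 2 := fun r hr ↦ by nlinarith [hr.1, hr.2]
  have hmaps : MapsTo ρ (Ioo 0 R) (Ioo 0 R) := fun r hr ↦
    ⟨sqrt_pos.2 (hpos r hr), (sqrt_lt' (hr.1.trans hr.2)).2 (by nlinarith [hr.1])⟩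
  have hinv : InvOn ρ ρ (Ioo 0 R) (Ioo 0 R) := by
    have h : LeftInvOn ρ ρ (Ioo 0 R) := fun r hr ↦ by
      simp only [ρ, sq_sqrt (hpos r hr).le, sub_sub_cancel, sqrt_sq hr.1.le]
    exact ⟨h, h⟩
  have hderiv : ∀ r ∈ Ioo 0 R, HasDerivWithinAt ρ (-r / ρ r) (Ioo 0 R) r := fun r hr ↦ by
    have := ((hasDerivAt_pow 2 r).const_sub (R ^ 2)).sqrt (hpos r hr).ne'
    refine (this.congr_deriv ?_).hasDerivWithinAt
    norm_num [ρ]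
    field_simp
  have hbij := hinv.bijOn hmaps hmaps
  conv_rhs => rw [← hbij.image_eq, integral_image_eq_integral_abs_deriv_smul measurableSet_Ioo
    hderiv hbij.injOn]
  refine setIntegral_congr_fun measurableSet_Ioo fun r hr ↦ ?_
  have hρ : 0 < √(R ^ 2 - r ^ 2) := (hmaps hr).1
  simp only [smul_eq_mul, abs_div, abs_neg, abs_of_pos hr.1, abs_of_pos hρ, ρ,
    sq_sqrt (hpos r hr).le]
  field_simp

theorem setIntegral_disc_comp_sq_sub (f : ℝ → ℝ) {R : ℝ} (hR : 0 ≤ R) :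
    ∫ p in {p : ℝ × ℝ | p.1 ^ 2 + p.2 ^ 2 < R ^ 2}, f (R ^ 2 - p.1 ^ 2 - p.2 ^ 2)
      = 2 * π * ∫ s in Ioo 0 R, s * f (s ^ 2) := by
  simp only [sub_sub]
  rw [setIntegral_disc_comp_sq_add_sq (fun u ↦ f (R ^ 2 - u)) hR,
    setIntegral_Ioo_mul_comp_sq_sub_sq]

theorem setIntegral_Ioo_cosh_mul {k R : ℝ} (hk : k ≠ 0) (hR : 0 ≤ R) :
    ∫ s in Ioo 0 R, cosh (k * s) = sinh (k * R) / k := by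
  have hderiv : ∀ s ∈ uIcc 0 R, HasDerivAt (fun s ↦ sinh (k * s) / k) (cosh (k * s)) s :=
    fun s _ ↦ by
    refine (((hasDerivAt_id s).const_mul k).sinh.div_const k).congr_deriv ?_
    field_simp
    simp
  rw [← integral_Ioc_eq_integral_Ioo, ← intervalIntegral.integral_of_le hR,
    intervalIntegral.integral_eq_sub_of_hasDerivAt hderiv
      ((by fun_prop : Continuous fun s ↦ cosh (k * s)).intervalIntegrable 0 R)]
  simp

theorem setIntegral_disc_cosh_div_sqrt {k R : ℝ} (hk : k ≠ 0) (hR : 0 ≤ R) :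
    ∫ p in {p : ℝ × ℝ | p.1 ^ 2 + p.2 ^ 2 < R ^ 2},
        cosh (k * √(R ^ 2 - p.1 ^ 2 - p.2 ^ 2)) / √(R ^ 2 - p.1 ^ 2 - p.2 ^ 2)
      = 2 * π * sinh (k * R) / k := by
  refine (setIntegral_disc_comp_sq_sub (fun u ↦ cosh (k * √u) / √u) hR).trans ?_
  rw [mul_div_assoc, ← setIntegral_Ioo_cosh_mul hk hR]
  congr 1
  refine setIntegral_congr_fun measurableSet_Ioo fun s hs ↦ ?_
  simp only [sqrt_sq hs.1.le]
  field_simp [hs.1.ne']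

theorem setIntegral_disc_rpow_sub {α R : ℝ} (hα : -1 < α) (hR : 0 ≤ R) :
    ∫ p in {p : ℝ × ℝ | p.1 ^ 2 + p.2 ^ 2 < R ^ 2}, (R ^ 2 - p.1 ^ 2 - p.2 ^ 2) ^ α
      = π * R ^ (2 * (α + 1)) / (α + 1) := by
  refine (setIntegral_disc_comp_sq_sub (fun u ↦ u ^ α) hR).trans ?_
  have hpow : ∀ s ∈ Ioo 0 R, s * (s ^ 2) ^ α = s ^ (2 * α + 1) := fun s hs ↦ by
    rw [← rpow_natCast, ← rpow_mul hs.1.le, rpow_add_one hs.1.ne', Nat.cast_ofNat, mul_comm]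
  rw [setIntegral_congr_fun measurableSet_Ioo hpow, ← integral_Ioc_eq_integral_Ioo,
    ← intervalIntegral.integral_of_le hR, integral_rpow (Or.inl (by linarith)),
    zero_rpow (by linarith), sub_zero, show 2 * α + 1 + 1 = 2 * (α + 1) by ring]
  have hα1 : α + 1 ≠ 0 := by linarith
  field_simp

theorem setIntegral_odd_conditional_density_eq_one (n : ℕ) {R : ℝ} (hR : 0 < R) :
    ∫ p in {p : ℝ × ℝ | p.1 ^ 2 + p.2 ^ 2 < R ^ 2},
        ((2 * n + 1 : ℝ) / (2 * π * R ^ (2 * n + 1)))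
          * (R ^ 2 - p.1 ^ 2 - p.2 ^ 2) ^ ((n : ℝ) - 1 / 2)
      = 1 := by
  have hexp : 2 * ((n : ℝ) - 1 / 2 + 1) = (2 * n + 1 : ℕ) := by push_cast; ring
  rw [integral_const_mul, setIntegral_disc_rpow_sub (by linarith [n.cast_nonneg (α := ℝ)]) hR.le,
    hexp, rpow_natCast]
  have hn : (n : ℝ) - 1 / 2 + 1 = (2 * n + 1) / 2 := by ring
  rw [hn]
  field_simp

theorem one_sub_exp_neg_two_mul (x : ℝ) : 1 - exp (-(2 * x)) = 2 * exp (-x) * sinh x := by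
  rw [sinh_eq, two_mul, neg_add, exp_add]
  field_simp
  rw [mul_sub, ← exp_add, neg_add_cancel, exp_zero, sq]

/-- The summands are `P(N = 2n + 1 | N odd)` for `N` Poisson of mean `x`, since
`P(N odd) = e⁻ˣ sinh x = (1 - e⁻²ˣ) / 2`. -/
theorem hasSum_odd_poisson_weights {x : ℝ} (hx : 0 < x) :
    HasSum (fun n : ℕ ↦ 2 * x ^ (2 * n + 1) * exp (-x) / ((1 - exp (-(2 * x))) * (2 * n + 1)!))
      1 := by
  have hsinh : sinh x ≠ 0 := (sinh_pos_iff.2 hx).ne'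
  have hterm : ∀ n : ℕ, 2 * x ^ (2 * n + 1) * exp (-x) / ((1 - exp (-(2 * x))) * (2 * n + 1)!)
      = x ^ (2 * n + 1) / (2 * n + 1)! / sinh x := fun n ↦ by
    rw [one_sub_exp_neg_two_mul]
    field_simp
  rw [funext hterm, ← div_self hsinh]
  exact (hasSum_sinh x).div_const _

/-- the law of the planar random motion with changes of direction at
odd-order Poisson times integrates to 1 on the disc, both in closed form and as the
mixture of conditional densities. -/
theorem planar_odd_motion_density_integrates_to_one (c lam t : ℝ)
    (hc : 0 < c) (hlam : 0 < lam) (ht : 0 < t) :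
    (∫ p in {p : ℝ × ℝ | p.1 ^ 2 + p.2 ^ 2 < c ^ 2 * t ^ 2},
        lam / (2 * Real.pi * c * Real.sinh (lam * t))
          * Real.cosh (lam / c * Real.sqrt (c ^ 2 * t ^ 2 - p.1 ^ 2 - p.2 ^ 2))
          / Real.sqrt (c ^ 2 * t ^ 2 - p.1 ^ 2 - p.2 ^ 2) = 1) ∧
    (∑' n : ℕ,
        (∫ p in {p : ℝ × ℝ | p.1 ^ 2 + p.2 ^ 2 < c ^ 2 * t ^ 2},
          ((2 * n + 1 : ℝ) / (2 * Real.pi * (c * t) ^ (2 * n + 1)))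
            * (c ^ 2 * t ^ 2 - p.1 ^ 2 - p.2 ^ 2) ^ ((n : ℝ) - 1 / 2))
          * (2 * (lam * t) ^ (2 * n + 1) * Real.exp (-(lam * t))
              / ((1 - Real.exp (-(2 * lam * t))) * (Nat.factorial (2 * n + 1) : ℝ)))
      = 1) := by
  have hR : 0 < c * t := mul_pos hc ht
  have hx : 0 < lam * t := mul_pos hlam ht
  simp_rw [← mul_pow]
  constructor
  · simp_rw [mul_div_assoc]
    have hkR : lam / c * (c * t) = lam * t := by field_simp
    rw [integral_const_mul, setIntegral_disc_cosh_div_sqrt (div_ne_zero hlam.ne' hc.ne') hR.le,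
      hkR]
    field_simp [(sinh_pos_iff.2 hx).ne']
  · simp only [setIntegral_odd_conditional_density_eq_one _ hR, one_mul, mul_assoc 2 lam t]
    exact (hasSum_odd_poisson_weights hx).tsum_eq
end
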